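/- arXiv:math/0511137 — 6 statements merged into one kernel-verified Lean document; each statement's English description precedes it below -/
import Mathlib

section
/- The GNS construction: If A is a (unital) C*-algebra and φ is a positive linear functional on A, then there exists a complex Hilbert space H, a star-algebra representation π of A by bounded operators on H, and a vector ξ₀ ∈ H which is cyclic for π (i.e., the linear span of {π(x)ξ₀ : x ∈ A} is dense in H) such that ⟨π(x)ξ₀, ξ₀⟩ = φ(x) for all x ∈ A. -/
open scoped InnerProductSpace ComplexOrder Classical
open Complex

noncomputable section

/-- A kernel `K : X × X → ℂ` is positive definite if every finite quadratic form
`∑ i j, K (x i) (x j) * ξ i * conj (ξ j)` is a nonnegative real number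
(expressed via the partial order on `ℂ`). -/
def IsPosDefKernel {X : Type*} (K : X → X → ℂ) : Prop :=
  ∀ (n : ℕ) (x : Fin n → X) (ξ : Fin n → ℂ),
    0 ≤ ∑ i, ∑ j, K (x i) (x j) * ξ i * (starRingEnd ℂ) (ξ j)

/-- `(H, v)` is a Kolmogorov representation of the kernel `K`: the span of the range of `v`
is dense and inner products of the `v x` reproduce `K`.  Mathlib's inner product is
conjugate-linear in the first variable, while the paper's is conjugate-linear in the second,
so the paper's `⟨v x, v y⟩ = K x y` reads `⟪v y, v x⟫_ℂ = K x y` here. -/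
def IsKolmogorovRep {X : Type*} (K : X → X → ℂ) (H : Type*) [NormedAddCommGroup H]
    [InnerProductSpace ℂ H] (v : X → H) : Prop :=
  Dense (↑(Submodule.span ℂ (Set.range v)) : Set H) ∧
    ∀ x y : X, ⟪v y, v x⟫_ℂ = K x y

/-- `L² ≤ c K K'` in the sense of Dutkay. -/
def KernelSqLE {X : Type*} (L K K' : X → X → ℂ) (c : ℝ) : Prop :=
  ∀ (m n : ℕ) (x : Fin m → X) (y : Fin n → X) (ξ : Fin m → ℂ) (η : Fin n → ℂ),
    ‖∑ i, ∑ j, L (x i) (y j) * ξ i * (starRingEnd ℂ) (η j)‖ ^ 2 ≤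
      c * (∑ i, ∑ i', K (x i) (x i') * ξ i * (starRingEnd ℂ) (ξ i')).re *
        (∑ j, ∑ j', K' (y j) (y j') * η j * (starRingEnd ℂ) (η j')).re

/-- `K' ≤ c K` for kernels, via the partial order on `ℂ`. -/
def KernelLE {X : Type*} (K' K : X → X → ℂ) (c : ℝ) : Prop :=
  ∀ (n : ℕ) (x : Fin n → X) (ξ : Fin n → ℂ),
    ∑ i, ∑ j, K' (x i) (x j) * ξ i * (starRingEnd ℂ) (ξ j) ≤
      (c : ℂ) * ∑ i, ∑ j, K (x i) (x j) * ξ i * (starRingEnd ℂ) (ξ j)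

/-- A bounded operator is positive if `⟨S v, v⟩ ≥ 0` for all `v` (paper convention;
in Mathlib's convention this is `0 ≤ ⟪v, S v⟫`). -/
def IsPositiveOp {H : Type*} [NormedAddCommGroup H] [InnerProductSpace ℂ H]
    (S : H →L[ℂ] H) : Prop :=
  ∀ v : H, 0 ≤ ⟪v, S v⟫_ℂ

/-- A family of vectors is a normalized tight frame. -/
def IsNormalizedTightFrame {H : Type*} [NormedAddCommGroup H] [InnerProductSpace ℂ H]
    {ι : Type*} (v : ι → H) : Prop :=
  ∀ f : H, ∑' i, ‖⟪v i, f⟫_ℂ‖ ^ 2 = ‖f‖ ^ 2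

/-- `P` is the orthogonal projection onto the set `S`: idempotent, self-adjoint,
with range `S`. -/
def IsOrthProjectionOnto {H : Type*} [NormedAddCommGroup H] [InnerProductSpace ℂ H]
    (P : H →L[ℂ] H) (S : Set H) : Prop :=
  (∀ v, P (P v) = P v) ∧ (∀ v w : H, ⟪P v, w⟫_ℂ = ⟪v, P w⟫_ℂ) ∧ Set.range P = S

/-- The two covariance relations for a Gabor-type kernel on `ℤ²`. -/
def GaborCovariant (lam : ℂ) (K : ℤ × ℤ → ℤ × ℤ → ℂ) : Prop :=
  (∀ m n m' n' : ℤ, K (m + 1, n) (m' + 1, n') = K (m, n) (m', n')) ∧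
  (∀ m n m' n' : ℤ, K (m, n + 1) (m', n' + 1) = lam ^ (m - m') * K (m, n) (m', n'))

/-- The vectors `U^m V^n ξ₀` of a Gabor type unitary system. -/
def gaborVec {H : Type*} [NormedAddCommGroup H] [InnerProductSpace ℂ H] [CompleteSpace H]
    (U V : unitary (H →L[ℂ] H)) (ξ₀ : H) (p : ℤ × ℤ) : H :=
  ((U ^ p.1 * V ^ p.2 : unitary (H →L[ℂ] H)) : H →L[ℂ] H) ξ₀

/-- `(H, U, V, ξ₀)` is the Gabor type cyclic system associated to the kernel `K` and the
unimodular scalar `lam` : `U V = lam V U`, the vectors `U^m V^n ξ₀` span a dense subspace,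
and their inner products reproduce `K`. -/
def IsGaborSystem {H : Type*} [NormedAddCommGroup H] [InnerProductSpace ℂ H] [CompleteSpace H]
    (lam : ℂ) (K : ℤ × ℤ → ℤ × ℤ → ℂ) (U V : unitary (H →L[ℂ] H)) (ξ₀ : H) : Prop :=
  ((U : H →L[ℂ] H) * (V : H →L[ℂ] H) = lam • ((V : H →L[ℂ] H) * (U : H →L[ℂ] H))) ∧
  Dense (↑(Submodule.span ℂ (Set.range (gaborVec U V ξ₀))) : Set H) ∧
  ∀ m n m' n' : ℤ,
    ⟪gaborVec U V ξ₀ (m', n'), gaborVec U V ξ₀ (m, n)⟫_ℂ = K (m, n) (m', n')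

universe u

/-!
The Hilbert space is Mathlib's GNS space of `φ`: the completion of `A` for the semi-inner
product `⟪a, b⟫ = φ (star a * b)`, on which `A` acts by left multiplication. The class `[1]` of
the unit is cyclic because `π a [1] = [a]` and the classes `[a]` are dense, and
`⟪[1], π a [1]⟫ = φ a`. To feed `φ` to that construction, `A` is ordered by its spectral order,
whose positive cone is generated by the elements `star x * x`.
-/

theorem map_nonneg_of_map_star_mul_self_nonneg {E F G : Type*} [NonUnitalSemiring E]
    [PartialOrder E] [StarRing E] [StarOrderedRing E] [AddCommMonoid F] [PartialOrder F]
    [IsOrderedAddMonoid F] [FunLike G E F] [AddMonoidHomClass G E F] (f : G)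
    (hf : ∀ x : E, 0 ≤ f (star x * x)) {a : E} (ha : 0 ≤ a) : 0 ≤ f a := by
  rw [StarOrderedRing.nonneg_iff] at ha
  induction ha using AddSubmonoid.closure_induction with
  | mem _ h =>
    obtain ⟨x, rfl⟩ := h
    exact hf x
  | zero => simp
  | add _ _ _ _ h₁ h₂ =>
    rw [map_add]
    exact add_nonneg h₁ h₂

namespace PositiveLinearMap

open UniformSpace

variable {A : Type*} [CStarAlgebra A] [PartialOrder A] [StarOrderedRing A] (f : A →ₚ[ℂ] ℂ)

def gnsCyclicVector : f.GNS := (f.toPreGNS 1 : f.GNS)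

theorem gnsStarAlgHom_apply_gnsCyclicVector (a : A) :
    f.gnsStarAlgHom a f.gnsCyclicVector = (f.toPreGNS a : f.GNS) := by
  simp [gnsCyclicVector]

theorem denseRange_gnsStarAlgHom_apply_gnsCyclicVector :
    DenseRange fun a : A => f.gnsStarAlgHom a f.gnsCyclicVector := by
  simp_rw [gnsStarAlgHom_apply_gnsCyclicVector]
  exact Completion.denseRange_coe.comp f.toPreGNS.surjective.denseRange
    (Completion.continuous_coe _)

theorem inner_gnsCyclicVector_gnsStarAlgHom_apply (a : A) :
    ⟪f.gnsCyclicVector, f.gnsStarAlgHom a f.gnsCyclicVector⟫_ℂ = f a := by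
  simp [gnsCyclicVector, preGNS_inner_def]

end PositiveLinearMap

/-- **The GNS construction.** A positive linear functional on a unital C*-algebra admits a
cyclic star-representation whose vector state is the functional. -/
theorem gns_construction {A : Type u} [NormedRing A] [StarRing A] [CStarRing A]
    [NormedAlgebra ℂ A] [StarModule ℂ A] [CompleteSpace A]
    (φ : A →ₗ[ℂ] ℂ) (hφ : ∀ x : A, 0 ≤ φ (star x * x)) :
    ∃ (H : Type u) (_ : NormedAddCommGroup H) (_ : InnerProductSpace ℂ H)
      (_ : CompleteSpace H) (π : A →⋆ₐ[ℂ] (H →L[ℂ] H)) (ξ₀ : H),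
      Dense (↑(Submodule.span ℂ (Set.range fun x : A => π x ξ₀)) : Set H) ∧
        ∀ x : A, ⟪ξ₀, π x ξ₀⟫_ℂ = φ x := by
  let _ : CStarAlgebra A := {}
  let _ := CStarAlgebra.spectralOrder A
  have := CStarAlgebra.spectralOrderedRing A
  let f : A →ₚ[ℂ] ℂ := .mk₀ φ fun _ ↦ map_nonneg_of_map_star_mul_self_nonneg φ hφ
  exact ⟨f.GNS, inferInstance, inferInstance, inferInstance, f.gnsStarAlgHom, f.gnsCyclicVector,
    f.denseRange_gnsStarAlgHom_apply_gnsCyclicVector.mono Submodule.subset_span,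
    f.inner_gnsCyclicVector_gnsStarAlgHom_apply⟩
end
end

section
/- Let G be a group and let K : G × G → ℂ be a group positive definite map, i.e., K is positive definite and K(x,y) = K(zx, zy) for all x, y, z ∈ G. Then there exists a complex Hilbert space H_K, a unitary representation π_K of G on H_K, and a vector ξ₀ ∈ H_K which is cyclic (the linear span of {π_K(x)ξ₀ : x ∈ G} is dense in H_K) such that ⟨π_K(x)ξ₀, π_K(y)ξ₀⟩ = K(x,y) for all x, y ∈ G. -/
open scoped InnerProductSpace ComplexOrder Classical
open Complex

noncomputable section

/-!
`K` defines a positive semidefinite Hermitian form on the finitely supported functions `G →₀ ℂ`;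
the completion of this semi-inner product space is `H_K`, and `ξ₀` is the indicator of `1`.
Left invariance of `K` says exactly that left translation preserves the form, so translation
extends to a unitary action on the completion, carrying `ξ₀` to the indicator of `g`.
-/

open ComplexConjugate UniformSpace

theorem IsIsometricSMul.of_inner_smul_smul (𝕜 : Type*) {G E : Type*} [RCLike 𝕜] [Monoid G]
    [SeminormedAddCommGroup E] [InnerProductSpace 𝕜 E] [DistribMulAction G E]
    (h : ∀ (g : G) (x y : E), ⟪g • x, g • y⟫_𝕜 = ⟪x, y⟫_𝕜) : IsIsometricSMul G E :=
  ⟨fun g => AddMonoidHomClass.isometry_of_norm (DistribSMul.toAddMonoidHom E g) fun x => by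
    simp only [DistribSMul.toAddMonoidHom_apply, @norm_eq_sqrt_re_inner 𝕜, h]⟩

instance IsIsometricSMul.toUniformContinuousConstSMul {M X : Type*}
    [PseudoMetricSpace X] [SMul M X] [IsIsometricSMul M X] : UniformContinuousConstSMul M X :=
  ⟨fun c => (isometry_smul X c).uniformContinuous⟩

namespace UniformSpace.Completion

instance {M X : Type*} [PseudoMetricSpace X] [SMul M X] [IsIsometricSMul M X] :
    IsIsometricSMul M (Completion X) :=
  ⟨fun c => Isometry.of_dist_eq fun x y => by
    induction x, y using induction_on₂ with
    | hp => exact isClosed_eq (by fun_prop) (by fun_prop)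
    | ih x y => rw [← coe_smul, ← coe_smul, Completion.dist_eq, Completion.dist_eq, dist_smul]⟩

theorem dense_span_range_coe {𝕜 E ι : Type*} [Semiring 𝕜] [SeminormedAddCommGroup E] [Module 𝕜 E]
    [UniformContinuousConstSMul 𝕜 E] {v : ι → E} (hv : Submodule.span 𝕜 (Set.range v) = ⊤) :
    Dense (Submodule.span 𝕜 (Set.range fun i => (v i : Completion E)) : Set (Completion E)) := by
  rw [show (Set.range fun i => (v i : Completion E)) =
      (toComplₗᵢ (𝕜 := 𝕜)).toLinearMap '' Set.range v by
      rw [← Set.range_comp]; rfl,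
    Submodule.span_image, hv, Submodule.map_top, LinearMap.coe_range]
  exact denseRange_coe

end UniformSpace.Completion

def DistribMulAction.toLinearIsometryAut (𝕜 G E : Type*) [NormedField 𝕜] [Group G]
    [SeminormedAddCommGroup E] [NormedSpace 𝕜 E] [DistribMulAction G E] [SMulCommClass G 𝕜 E]
    [IsIsometricSMul G E] : G →* (E ≃ₗᵢ[𝕜] E) where
  toFun g :=
    { DistribMulAction.toLinearEquiv 𝕜 E g with
      norm_map' := fun x => by simpa using dist_smul g x 0 }
  map_one' := LinearIsometryEquiv.ext (one_smul G)
  map_mul' g h := LinearIsometryEquiv.ext (mul_smul g h)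

@[simp]
theorem DistribMulAction.toLinearIsometryAut_apply (𝕜 : Type*) {G E : Type*} [NormedField 𝕜]
    [Group G] [SeminormedAddCommGroup E] [NormedSpace 𝕜 E] [DistribMulAction G E]
    [SMulCommClass G 𝕜 E] [IsIsometricSMul G E] (g : G) (x : E) :
    DistribMulAction.toLinearIsometryAut 𝕜 G E g x = g • x :=
  rfl

theorem IsPosDefKernel.conj_apply {X : Type*} {K : X → X → ℂ} (hK : IsPosDefKernel K)
    (x y : X) : conj (K x y) = K y x := by
  have hdiag : ∀ z : X, (K z z).im = 0 := fun z => by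
    simpa using (Complex.le_def.mp (hK 1 ![z] ![1])).2.symm
  -- positivity on `(1, 1)` and on `(1, I)` makes `K x y + K y x` real and `K x y - K y x` imaginary
  have h1 := (Complex.le_def.mp (hK 2 ![x, y] ![1, 1])).2.symm
  have h2 := (Complex.le_def.mp (hK 2 ![x, y] ![1, I])).2.symm
  simp only [Fin.sum_univ_two, Matrix.cons_val_zero, Matrix.cons_val_one, map_one, mul_one,
    conj_I, zero_im, add_im, mul_im, mul_re, I_re, I_im, neg_re, neg_im] at h1 h2
  apply Complex.ext <;> simp only [conj_re, conj_im] <;> linarith [hdiag x, hdiag y]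

theorem IsPosDefKernel.sum_nonneg {X ι : Type*} {K : X → X → ℂ} (hK : IsPosDefKernel K)
    (s : Finset ι) (x : ι → X) (ξ : ι → ℂ) :
    0 ≤ ∑ i ∈ s, ∑ j ∈ s, K (x i) (x j) * ξ i * conj (ξ j) := by
  let e := s.equivFin
  convert hK _ (fun i => x (e.symm i)) (fun i => ξ (e.symm i)) using 1
  rw [← Finset.sum_coe_sort s, ← e.symm.sum_comp]
  refine Finset.sum_congr rfl fun i _ => ?_
  rw [← Finset.sum_coe_sort s, ← e.symm.sum_comp]

section KernelForm

variable {X : Type*} (K : X → X → ℂ)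

def kernelForm (f g : X →₀ ℂ) : ℂ :=
  g.sum fun x b => f.sum fun y a => K x y * b * conj a

theorem kernelForm_add_left (f f' g : X →₀ ℂ) :
    kernelForm K (f + f') g = kernelForm K f g + kernelForm K f' g := by
  unfold kernelForm
  rw [← Finsupp.sum_add]
  exact Finsupp.sum_congr fun x _ =>
    Finsupp.sum_add_index' (fun y => by simp) fun y a a' => by rw [map_add]; ring

theorem kernelForm_smul_left (r : ℂ) (f g : X →₀ ℂ) :
    kernelForm K (r • f) g = conj r * kernelForm K f g := by
  unfold kernelForm
  rw [Finsupp.mul_sum]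
  refine Finsupp.sum_congr fun x _ => ?_
  rw [Finsupp.sum_smul_index' fun y => by simp, Finsupp.mul_sum]
  exact Finsupp.sum_congr fun y _ => by rw [smul_eq_mul, map_mul]; ring

theorem conj_kernelForm (hK : ∀ x y, conj (K x y) = K y x) (f g : X →₀ ℂ) :
    conj (kernelForm K f g) = kernelForm K g f := by
  unfold kernelForm
  rw [map_finsuppSum, Finsupp.sum_comm f g]
  refine Finsupp.sum_congr fun x _ => ?_
  rw [map_finsuppSum]
  exact Finsupp.sum_congr fun y _ => by rw [map_mul, map_mul, conj_conj, hK]; ring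

theorem kernelForm_self_nonneg (hK : IsPosDefKernel K) (f : X →₀ ℂ) :
    0 ≤ kernelForm K f f :=
  hK.sum_nonneg f.support id f

theorem kernelForm_single_single (x y : X) (a b : ℂ) :
    kernelForm K (Finsupp.single y a) (Finsupp.single x b) = K x y * b * conj a := by
  simp [kernelForm]

theorem kernelForm_equivMapDomain (e : X ≃ X) (he : ∀ x y, K (e x) (e y) = K x y)
    (f g : X →₀ ℂ) :
    kernelForm K (f.equivMapDomain e) (g.equivMapDomain e) = kernelForm K f g := by
  simp only [kernelForm, Finsupp.sum_equivMapDomain, he]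

end KernelForm

/-- `X →₀ ℂ` under another name, so that it can carry the semi-inner product `kernelForm K`. -/
def KernelPreHilbert {X : Type*} (_K : X → X → ℂ) : Type _ := X →₀ ℂ

namespace KernelPreHilbert

variable {X : Type*} (K : X → X → ℂ)

instance : AddCommGroup (KernelPreHilbert K) := inferInstanceAs (AddCommGroup (X →₀ ℂ))

instance : Module ℂ (KernelPreHilbert K) := inferInstanceAs (Module ℂ (X →₀ ℂ))

def single (x : X) : KernelPreHilbert K := Finsupp.single x 1

theorem span_range_single : Submodule.span ℂ (Set.range (single K)) = ⊤ :=
  (Finsupp.basisSingleOne (R := ℂ) (ι := X)).span_eq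

section PosDef

variable [hK : Fact (IsPosDefKernel K)]

abbrev preInnerProductCore : PreInnerProductSpace.Core ℂ (KernelPreHilbert K) where
  inner := kernelForm K
  conj_inner_symm f g := conj_kernelForm K hK.out.conj_apply g f
  re_inner_nonneg f := (Complex.le_def.mp (kernelForm_self_nonneg K hK.out f)).1
  add_left := kernelForm_add_left K
  smul_left f g r := kernelForm_smul_left K r f g

instance : SeminormedAddCommGroup (KernelPreHilbert K) :=
  @InnerProductSpace.Core.toSeminormedAddCommGroup ℂ _ _ _ _ (preInnerProductCore K)

instance : InnerProductSpace ℂ (KernelPreHilbert K) :=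
  InnerProductSpace.ofCore (preInnerProductCore K)

theorem inner_single_single (x y : X) : ⟪single K y, single K x⟫_ℂ = K x y :=
  (kernelForm_single_single K x y 1 1).trans (by simp)

theorem isKolmogorovRep_completion :
    IsKolmogorovRep K (Completion (KernelPreHilbert K)) fun x => (single K x : Completion _) :=
  ⟨Completion.dense_span_range_coe (span_range_single K), fun x y => by
    rw [Completion.inner_coe, inner_single_single]⟩

end PosDef

section Action

variable {G : Type*} [Group G] [MulAction G X]

instance : DistribMulAction G (KernelPreHilbert K) := Finsupp.comapDistribMulAction

theorem smul_def (g : G) (f : KernelPreHilbert K) :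
    g • f = Finsupp.equivMapDomain (MulAction.toPerm g) f :=
  (Finsupp.equivMapDomain_eq_mapDomain (MulAction.toPerm g) f).symm

instance : SMulCommClass G ℂ (KernelPreHilbert K) :=
  ⟨fun _ _ _ => Finsupp.mapDomain_smul _ _⟩

theorem smul_single (g : G) (x : X) : g • single K x = single K (g • x) :=
  Finsupp.mapDomain_single

theorem inner_smul_smul [Fact (IsPosDefKernel K)]
    (hinv : ∀ (g : G) x y, K (g • x) (g • y) = K x y) (g : G) (f f' : KernelPreHilbert K) :
    ⟪g • f, g • f'⟫_ℂ = ⟪f, f'⟫_ℂ := by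
  rw [smul_def, smul_def]
  exact kernelForm_equivMapDomain K _ (hinv g) f f'

end Action

end KernelPreHilbert

universe u

/-- A group positive definite map induces a cyclic unitary representation of the group. -/
theorem group_posdef_gives_unitary_rep {G : Type u} [Group G] (K : G → G → ℂ)
    (hK : IsPosDefKernel K) (hinv : ∀ x y z : G, K x y = K (z * x) (z * y)) :
    ∃ (H : Type u) (_ : NormedAddCommGroup H) (_ : InnerProductSpace ℂ H)
      (_ : CompleteSpace H) (π : G →* (H ≃ₗᵢ[ℂ] H)) (ξ₀ : H),
      Dense (↑(Submodule.span ℂ (Set.range fun g : G => π g ξ₀)) : Set H) ∧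
        ∀ x y : G, ⟪π y ξ₀, π x ξ₀⟫_ℂ = K x y := by
  have : Fact (IsPosDefKernel K) := ⟨hK⟩
  have : IsIsometricSMul G (KernelPreHilbert K) := .of_inner_smul_smul ℂ
    (KernelPreHilbert.inner_smul_smul K fun g x y => (hinv x y g).symm)
  let ξ (x : G) : Completion (KernelPreHilbert K) := KernelPreHilbert.single K x
  have horbit (g : G) : g • ξ 1 = ξ g := by
    rw [← Completion.coe_smul, KernelPreHilbert.smul_single, smul_eq_mul, mul_one]
  obtain ⟨hdense, hinner⟩ := KernelPreHilbert.isKolmogorovRep_completion K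
  refine ⟨Completion (KernelPreHilbert K), inferInstance, inferInstance, inferInstance,
    DistribMulAction.toLinearIsometryAut ℂ G _, ξ 1, ?_, ?_⟩
  · simpa only [DistribMulAction.toLinearIsometryAut_apply, horbit] using hdense
  · simpa only [DistribMulAction.toLinearIsometryAut_apply, horbit] using hinner
end
end

section
/- Let K be a positive definite map on a nonempty set X with Kolmogorov representation (H_K, v_K). Then for every positive definite map K' on X with K' ≤ cK for some c > 0, there exists a unique positive bounded operator S : H_K → H_K with ⟨S v_K(x), v_K(y)⟩ = K'(x,y) for all x, y ∈ X, and moreover ‖S‖ ≤ c. Conversely, for every positive bounded operator S on H_K there is a unique positive definite map K' on X satisfying ⟨S v_K(x), v_K(y)⟩ = K'(x,y) for all x, y ∈ X, and in addition K' ≤ ‖S‖ K. -/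
open scoped InnerProductSpace ComplexOrder Classical
open Complex

noncomputable section

/-! If `K' ≤ c K`, then `‖∑ ξₓ w x‖² ≤ c ‖∑ ξₓ v x‖²` for a feature family `w` of `K'` (Moore's
reproducing kernel Hilbert space), so `v x ↦ w x` extends to an operator `A` with `‖A‖ ≤ √c`,
and `S = A† A` is positive with `⟪v y, S (v x)⟫ = ⟪A v y, A v x⟫ = K' x y`; uniqueness holds
because the span of the `v x` is dense. Conversely, `∑ ⟪v xⱼ, S (v xᵢ)⟫ ξᵢ conj ξⱼ = ⟪u, S u⟫`
with `u = ∑ ξᵢ v xᵢ`, which is nonnegative and at most `‖S‖ ‖u‖²`. -/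

section Kernels

variable {X : Type*} {K : X → X → ℂ}

theorem Finset.sum_eq_sum_fin {α M : Type*} [AddCommMonoid M] (s : Finset α) (f : α → M) :
    ∑ x ∈ s, f x = ∑ i, f (s.equivFin.symm i) := by
  rw [← s.sum_coe_sort, ← s.equivFin.symm.sum_comp]

theorem IsPosDefKernel.apply_swap (hK : IsPosDefKernel K) (x y : X) :
    K y x = starRingEnd ℂ (K x y) := by
  have hxx := (nonneg_iff.mp (hK 1 ![x] ![1])).2
  have hyy := (nonneg_iff.mp (hK 1 ![y] ![1])).2
  have h₁ := (nonneg_iff.mp (hK 2 ![x, y] ![1, 1])).2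
  have h₂ := (nonneg_iff.mp (hK 2 ![x, y] ![1, I])).2
  simp [Fin.sum_univ_two] at hxx hyy h₁ h₂
  apply Complex.ext <;> simp <;> linarith

theorem IsPosDefKernel.finsuppSum_nonneg (hK : IsPosDefKernel K) (ξ : X →₀ ℂ) :
    0 ≤ ξ.sum fun x a => ξ.sum fun y b => K x y * a * starRingEnd ℂ b := by
  simp only [Finsupp.sum, Finset.sum_eq_sum_fin ξ.support]
  exact hK _ _ _

/-- Mathlib's reproducing kernels are `ℂ →L[ℂ] ℂ`-valued and conjugate-linear in the first
variable, so a kernel in the convention `K x y = ⟪v y, v x⟫` enters transposed. -/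
def kernelMatrix (K : X → X → ℂ) : Matrix X X (ℂ →L[ℂ] ℂ) :=
  Matrix.of fun x y => K y x • 1

theorem IsPosDefKernel.posSemidef_kernelMatrix (hK : IsPosDefKernel K) :
    (kernelMatrix K).PosSemidef := by
  have h := (RKHS.posSemidef_tfae (K := kernelMatrix K)).out 0 2
  refine h.mpr ⟨?_, fun ξ => ?_⟩
  · ext x y : 1
    simp [kernelMatrix, Matrix.conjTranspose_apply, hK.apply_swap x y]
  · have hconj : (ξ.sum fun x a => ξ.sum fun y b => ⟪kernelMatrix K y x a, b⟫_ℂ) =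
        starRingEnd ℂ (ξ.sum fun x a => ξ.sum fun y b => K x y * a * starRingEnd ℂ b) := by
      simp [kernelMatrix, map_finsuppSum, mul_comm]
    rw [hconj, RCLike.re_to_complex, conj_re]
    exact (nonneg_iff.mp (hK.finsuppSum_nonneg ξ)).1

theorem inner_kerFun_ofKernel [Fact (kernelMatrix K).PosSemidef] (x y : X) :
    ⟪RKHS.kerFun (RKHS.OfKernel (kernelMatrix K)) y 1,
      RKHS.kerFun (RKHS.OfKernel (kernelMatrix K)) x 1⟫_ℂ = K x y := by
  rw [RKHS.kerFun_inner, RKHS.kerFun_apply, RKHS.OfKernel.kernel_ofKernel]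
  simp [kernelMatrix]

end Kernels

section Gram

variable {X : Type*} {H : Type*} [NormedAddCommGroup H] [InnerProductSpace ℂ H]

theorem Finsupp.linearCombination_eq_sum_fin {R M : Type*} [Semiring R] [AddCommMonoid M]
    [Module R M] (v : X → M) (ξ : X →₀ R) :
    linearCombination R v ξ =
      ∑ i, ξ (ξ.support.equivFin.symm i) • v (ξ.support.equivFin.symm i) := by
  rw [linearCombination_apply, Finsupp.sum, Finset.sum_eq_sum_fin]

theorem sum_sum_inner_apply_mul {ι : Type*} [Fintype ι] (S : H →L[ℂ] H) (v : X → H)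
    (x : ι → X) (ξ : ι → ℂ) :
    ∑ i, ∑ j, ⟪v (x j), S (v (x i))⟫_ℂ * ξ i * starRingEnd ℂ (ξ j) =
      ⟪∑ j, ξ j • v (x j), S (∑ i, ξ i • v (x i))⟫_ℂ := by
  simp only [map_sum, map_smul, sum_inner, inner_sum, inner_smul_left, inner_smul_right,
    Finset.mul_sum]
  exact Finset.sum_congr rfl fun i _ => Finset.sum_congr rfl fun j _ => by ring

theorem sum_sum_kernel_mul {K : X → X → ℂ} {v : X → H} (hv : ∀ x y, ⟪v y, v x⟫_ℂ = K x y)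
    {ι : Type*} [Fintype ι] (x : ι → X) (ξ : ι → ℂ) :
    ∑ i, ∑ j, K (x i) (x j) * ξ i * starRingEnd ℂ (ξ j) =
      ⟪∑ j, ξ j • v (x j), ∑ i, ξ i • v (x i)⟫_ℂ := by
  simpa [hv] using sum_sum_inner_apply_mul (.id ℂ H) v x ξ

theorem KernelLE.norm_linearCombination_sq_le {G : Type*} [NormedAddCommGroup G]
    [InnerProductSpace ℂ G] {K K' : X → X → ℂ} {c : ℝ} (hle : KernelLE K' K c)
    {v : X → H} (hv : ∀ x y, ⟪v y, v x⟫_ℂ = K x y)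
    {w : X → G} (hw : ∀ x y, ⟪w y, w x⟫_ℂ = K' x y) (ξ : X →₀ ℂ) :
    ‖Finsupp.linearCombination ℂ w ξ‖ ^ 2 ≤ c * ‖Finsupp.linearCombination ℂ v ξ‖ ^ 2 := by
  have h := hle _ (fun i => ξ.support.equivFin.symm i) (fun i => ξ (ξ.support.equivFin.symm i))
  rw [sum_sum_kernel_mul hw, sum_sum_kernel_mul hv, ← Finsupp.linearCombination_eq_sum_fin,
    ← Finsupp.linearCombination_eq_sum_fin, inner_self_eq_norm_sq_to_K,
    inner_self_eq_norm_sq_to_K, RCLike.ofReal_eq_complex_ofReal] at h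
  exact_mod_cast h

end Gram
section Operators

variable {X : Type*} {H : Type*} [NormedAddCommGroup H] [InnerProductSpace ℂ H]
  {K : X → X → ℂ} {v : X → H}

theorem IsKolmogorovRep.denseRange_linearCombination (hrep : IsKolmogorovRep K H v) :
    DenseRange (Finsupp.linearCombination ℂ v) := by
  rw [DenseRange, ← LinearMap.coe_range, Finsupp.range_linearCombination]
  exact hrep.1

theorem isPositiveOp_adjoint_comp_self [CompleteSpace H] {G : Type*} [NormedAddCommGroup G]
    [InnerProductSpace ℂ G] [CompleteSpace G] (A : H →L[ℂ] G) :
    IsPositiveOp (ContinuousLinearMap.adjoint A ∘L A) := fun u => by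
  rw [ContinuousLinearMap.comp_apply, ContinuousLinearMap.adjoint_inner_right,
    inner_self_eq_norm_sq_to_K]
  positivity

theorem IsKolmogorovRep.exists_isPositiveOp [CompleteSpace H] {G : Type*}
    [NormedAddCommGroup G] [InnerProductSpace ℂ G] [CompleteSpace G]
    (hrep : IsKolmogorovRep K H v) {K' : X → X → ℂ} {w : X → G}
    (hw : ∀ x y, ⟪w y, w x⟫_ℂ = K' x y) {c : ℝ} (hc : 0 ≤ c) (hle : KernelLE K' K c) :
    ∃ S : H →L[ℂ] H, IsPositiveOp S ∧ (∀ x y, ⟪v y, S (v x)⟫_ℂ = K' x y) ∧ ‖S‖ ≤ c := by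
  have hbound (ξ : X →₀ ℂ) :
      ‖Finsupp.linearCombination ℂ w ξ‖ ≤ √c * ‖Finsupp.linearCombination ℂ v ξ‖ := by
    rw [← Real.sqrt_sq (norm_nonneg _), ← Real.sqrt_sq (norm_nonneg (_ : H)), ← Real.sqrt_mul hc]
    exact Real.sqrt_le_sqrt (hle.norm_linearCombination_sq_le hrep.2 hw ξ)
  set A : H →L[ℂ] G :=
    (Finsupp.linearCombination ℂ w).extendOfNorm (Finsupp.linearCombination ℂ v)
  have hA (x : X) : A (v x) = w x := by
    simpa using LinearMap.extendOfNorm_eq hrep.denseRange_linearCombination ⟨_, hbound⟩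
      (Finsupp.single x 1)
  have hAnorm : ‖A‖ ≤ √c :=
    LinearMap.opNorm_extendOfNorm_le hrep.denseRange_linearCombination (Real.sqrt_nonneg c)
      hbound
  refine ⟨ContinuousLinearMap.adjoint A ∘L A, isPositiveOp_adjoint_comp_self A,
    fun x y => ?_, ?_⟩
  · rw [ContinuousLinearMap.comp_apply, ContinuousLinearMap.adjoint_inner_right, hA, hA, hw]
  · rw [ContinuousLinearMap.norm_adjoint_comp_self, ← Real.mul_self_sqrt hc]
    exact mul_self_le_mul_self (norm_nonneg A) hAnorm

theorem IsKolmogorovRep.ext_of_inner_apply (hrep : IsKolmogorovRep K H v) {S S' : H →L[ℂ] H}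
    (h : ∀ x y, ⟪v y, S (v x)⟫_ℂ = ⟪v y, S' (v x)⟫_ℂ) : S = S' := by
  refine ContinuousLinearMap.ext_on hrep.1 ?_
  rintro _ ⟨x, rfl⟩
  refine innerSL_inj.mp (ContinuousLinearMap.ext_on hrep.1 ?_)
  rintro _ ⟨y, rfl⟩
  rw [innerSL_apply_apply, innerSL_apply_apply, ← inner_conj_symm, h, inner_conj_symm]

theorem IsPositiveOp.isPosDefKernel {S : H →L[ℂ] H} (hS : IsPositiveOp S) :
    IsPosDefKernel fun x y => ⟪v y, S (v x)⟫_ℂ := fun n x ξ => by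
  simp only [sum_sum_inner_apply_mul]
  exact hS _

theorem IsPositiveOp.inner_apply_le {S : H →L[ℂ] H} (hS : IsPositiveOp S) (u : H) :
    ⟪u, S u⟫_ℂ ≤ ‖S‖ * ⟪u, u⟫_ℂ := by
  rw [eq_coe_norm_of_nonneg (hS u), inner_self_eq_norm_sq_to_K,
    RCLike.ofReal_eq_complex_ofReal]
  exact_mod_cast calc ‖⟪u, S u⟫_ℂ‖ ≤ ‖u‖ * ‖S u‖ := norm_inner_le_norm _ _
    _ ≤ ‖u‖ * (‖S‖ * ‖u‖) := by gcongr; exact S.le_opNorm u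
    _ = ‖S‖ * ‖u‖ ^ 2 := by ring

theorem IsPositiveOp.kernelLE (hrep : IsKolmogorovRep K H v) {S : H →L[ℂ] H}
    (hS : IsPositiveOp S) : KernelLE (fun x y => ⟪v y, S (v x)⟫_ℂ) K ‖S‖ := fun n x ξ => by
  simp only [sum_sum_inner_apply_mul, sum_sum_kernel_mul hrep.2]
  exact hS.inner_apply_le _

end Operators

theorem posdef_dominated_iff_positive_operator_general {X : Type*} (K : X → X → ℂ)
    {H : Type*} [NormedAddCommGroup H] [InnerProductSpace ℂ H] [CompleteSpace H]
    (v : X → H) (hrep : IsKolmogorovRep K H v) :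
    (∀ (K' : X → X → ℂ) (c : ℝ), 0 < c → IsPosDefKernel K' → KernelLE K' K c →
      (∃! S : H →L[ℂ] H, IsPositiveOp S ∧ ∀ x y : X, ⟪v y, S (v x)⟫_ℂ = K' x y) ∧
      (∀ S : H →L[ℂ] H,
        (IsPositiveOp S ∧ ∀ x y : X, ⟪v y, S (v x)⟫_ℂ = K' x y) → ‖S‖ ≤ c)) ∧
    (∀ S : H →L[ℂ] H, IsPositiveOp S →
      (∃! K' : X → X → ℂ, ∀ x y : X, ⟪v y, S (v x)⟫_ℂ = K' x y) ∧
      (∀ K' : X → X → ℂ, (∀ x y : X, ⟪v y, S (v x)⟫_ℂ = K' x y) →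
        IsPosDefKernel K' ∧ KernelLE K' K ‖S‖)) := by
  refine ⟨fun K' c hc hK' hle => ?_, fun S hS => ⟨?_, fun K' hK' => ?_⟩⟩
  · have : Fact (kernelMatrix K').PosSemidef := ⟨hK'.posSemidef_kernelMatrix⟩
    obtain ⟨S, hSpos, hSK', hSc⟩ := hrep.exists_isPositiveOp inner_kerFun_ofKernel hc.le hle
    have huniq (S' : H →L[ℂ] H) (hS' : IsPositiveOp S' ∧ ∀ x y, ⟪v y, S' (v x)⟫_ℂ = K' x y) :
        S' = S :=
      hrep.ext_of_inner_apply fun x y => by rw [hS'.2, hSK']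
    exact ⟨⟨S, ⟨hSpos, hSK'⟩, huniq⟩, fun S' hS' => huniq S' hS' ▸ hSc⟩
  · exact ⟨_, fun _ _ => rfl, fun K' hK' => funext₂ fun x y => (hK' x y).symm⟩
  · obtain rfl : K' = fun x y => ⟪v y, S (v x)⟫_ℂ := funext₂ fun x y => (hK' x y).symm
    exact ⟨hS.isPosDefKernel, hS.kernelLE hrep⟩

/-- Positive operators on `H_K` correspond to positive definite kernels dominated by a
multiple of `K`. -/
theorem posdef_dominated_iff_positive_operator {X : Type*} [Nonempty X] (K : X → X → ℂ)
    (hK : IsPosDefKernel K)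
    {H : Type*} [NormedAddCommGroup H] [InnerProductSpace ℂ H] [CompleteSpace H]
    (v : X → H) (hrep : IsKolmogorovRep K H v) :
    (∀ (K' : X → X → ℂ) (c : ℝ), 0 < c → IsPosDefKernel K' → KernelLE K' K c →
      (∃! S : H →L[ℂ] H, IsPositiveOp S ∧ ∀ x y : X, ⟪v y, S (v x)⟫_ℂ = K' x y) ∧
      (∀ S : H →L[ℂ] H,
        (IsPositiveOp S ∧ ∀ x y : X, ⟪v y, S (v x)⟫_ℂ = K' x y) → ‖S‖ ≤ c)) ∧
    (∀ S : H →L[ℂ] H, IsPositiveOp S →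
      (∃! K' : X → X → ℂ, ∀ x y : X, ⟪v y, S (v x)⟫_ℂ = K' x y) ∧
      (∀ K' : X → X → ℂ, (∀ x y : X, ⟪v y, S (v x)⟫_ℂ = K' x y) →
        IsPosDefKernel K' ∧ KernelLE K' K ‖S‖)) :=
  posdef_dominated_iff_positive_operator_general K v hrep
end
end

section
/- Let A be a (unital) C*-algebra, let φ, φ' be positive linear functionals on A with GNS representations (H_φ, π_φ, ξ₀) and (H_{φ'}, π_{φ'}, ξ₀'), and let φ₀ : A → ℂ be a linear map such that |φ₀(y*x)|² ≤ c φ(x*x) φ'(y*y) for all x, y ∈ A and some c > 0. Then there exists a unique bounded linear operator S : H_φ → H_{φ'} such that S π_φ(x) = π_{φ'}(x) S for all x ∈ A and ⟨S π_φ(x) ξ₀, π_{φ'}(y) ξ₀'⟩ = φ₀(y*x) for all x, y ∈ A; moreover ‖S‖ ≤ √c. Conversely, if S : H_φ → H_{φ'} is a bounded linear operator satisfying S π_φ(x) = π_{φ'}(x) S for all x ∈ A, then there is a unique linear map φ₀ : A → ℂ with ⟨S π_φ(x) ξ₀, π_{φ'}(y) ξ₀'⟩ = φ₀(y*x) for all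 x, y ∈ A, and it satisfies |φ₀(y*x)|² ≤ ‖S‖² φ(x*x) φ'(y*y) for all x, y ∈ A. -/
open scoped InnerProductSpace ComplexOrder Classical
open Complex

noncomputable section

variable {A : Type*} [NormedRing A] [StarRing A] [CStarRing A]
  [NormedAlgebra ℂ A] [StarModule ℂ A] [CompleteSpace A]

/-- `(H, π, ξ₀)` is a GNS representation of the positive linear functional `φ`. -/
def IsGNSRep {H : Type*} [NormedAddCommGroup H] [InnerProductSpace ℂ H] [CompleteSpace H]
    (φ : A →ₗ[ℂ] ℂ) (π : A →⋆ₐ[ℂ] (H →L[ℂ] H)) (ξ₀ : H) : Prop :=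
  Dense (↑(Submodule.span ℂ (Set.range fun x : A => π x ξ₀)) : Set H) ∧
    ∀ x : A, ⟪ξ₀, π x ξ₀⟫_ℂ = φ x

/-!
The hypothesis says that `(π' y ξ₀', π x ξ₀) ↦ φ₀ (star y * x)` is a well-defined sesquilinear
form of norm at most `√c` on the dense subspaces `π' A ξ₀'` and `π A ξ₀`. It extends to `H' × H`,
and the Riesz representation turns it into `S`, which intertwines because
`star y * (a * x) = star (star a * y) * x`. Conversely `φ₀ x = ⟪ξ₀', S (π x ξ₀)⟫`, and its bound
is Cauchy–Schwarz together with `‖π x ξ₀‖ ^ 2 = φ (star x * x)`.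
-/

namespace LinearMap

variable {𝕜 E F Eₗ Fₗ G : Type*} [NontriviallyNormedField 𝕜] {σ : 𝕜 →+* 𝕜}
  [AddCommGroup E] [Module 𝕜 E] [AddCommGroup F] [Module 𝕜 F]
  [NormedAddCommGroup Eₗ] [NormedSpace 𝕜 Eₗ] [NormedAddCommGroup Fₗ] [NormedSpace 𝕜 Fₗ]
  [NormedAddCommGroup G] [NormedSpace 𝕜 G] [CompleteSpace G]

theorem exists_extend₂_of_norm_le (b : F →ₛₗ[σ] E →ₗ[𝕜] G) {e : E →ₗ[𝕜] Eₗ} {f : F →ₗ[𝕜] Fₗ}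
    (he : DenseRange e) (hf : DenseRange f) {M : ℝ} (hM : 0 ≤ M)
    (hb : ∀ y x, ‖b y x‖ ≤ M * ‖f y‖ * ‖e x‖) :
    ∃ B : Fₗ →SL[σ] Eₗ →L[𝕜] G, (∀ y x, B (f y) (e x) = b y x) ∧ ‖B‖ ≤ M := by
  have extend_eq (y : F) (x : E) : (b y).extendOfNorm e (e x) = b y x :=
    extendOfNorm_eq he ⟨_, hb y⟩ x
  let β : F →ₛₗ[σ] Eₗ →L[𝕜] G :=
    { toFun := fun y => (b y).extendOfNorm e
      map_add' := fun y y' => extendOfNorm_unique he _ (hb (y + y')) _ <| by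
        ext x; simp [extend_eq]
      map_smul' := fun a y => extendOfNorm_unique he _ (hb (a • y)) _ <| by
        ext x; simp [extend_eq] }
  have hβ (y : F) : ‖β y‖ ≤ M * ‖f y‖ :=
    opNorm_extendOfNorm_le he (by positivity) (hb y)
  refine ⟨β.extendOfNorm f, fun y x => ?_, opNorm_extendOfNorm_le hf hM hβ⟩
  rw [extendOfNorm_eq hf ⟨M, hβ⟩]
  exact extend_eq y x

end LinearMap

section InnerProductSpace

variable {𝕜 E F : Type*} [RCLike 𝕜]
  [NormedAddCommGroup E] [InnerProductSpace 𝕜 E] [NormedAddCommGroup F] [InnerProductSpace 𝕜 F]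

theorem exists_inner_apply_eq_sesqForm [CompleteSpace E] [CompleteSpace F]
    (B : F →L⋆[𝕜] E →L[𝕜] 𝕜) :
    ∃ S : E →L[𝕜] F, (∀ w v, ⟪w, S v⟫_𝕜 = B w v) ∧ ‖S‖ ≤ ‖B‖ := by
  let T : F →L[𝕜] E :=
    (InnerProductSpace.toDual 𝕜 E).symm.toContinuousLinearEquiv.toContinuousLinearMap.comp B
  refine ⟨ContinuousLinearMap.adjoint T, fun w v => ?_, ?_⟩
  · rw [ContinuousLinearMap.adjoint_inner_right]
    exact InnerProductSpace.toDual_symm_apply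
  · rw [LinearIsometryEquiv.norm_map]
    refine (ContinuousLinearMap.opNorm_comp_le _ _).trans ?_
    exact mul_le_of_le_one_left (norm_nonneg B) (LinearIsometry.norm_toContinuousLinearMap_le _)

theorem ContinuousLinearMap.ext_inner_of_denseRange {ι κ : Type*} {e : ι → E} {f : κ → F}
    (he : DenseRange e) (hf : DenseRange f) {S T : E →L[𝕜] F}
    (h : ∀ i k, ⟪f k, S (e i)⟫_𝕜 = ⟪f k, T (e i)⟫_𝕜) : S = T := by
  refine ContinuousLinearMap.ext fun v => he.induction_on v (isClosed_eq S.continuous T.continuous)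
    fun i => ext_inner_left 𝕜 fun w => ?_
  exact hf.induction_on w (isClosed_eq (by fun_prop) (by fun_prop)) (h i)

end InnerProductSpace

section StarAlgHom

variable {R H H' : Type*} [Ring R] [StarRing R] [Algebra ℂ R]
  [NormedAddCommGroup H] [InnerProductSpace ℂ H] [CompleteSpace H]
  [NormedAddCommGroup H'] [InnerProductSpace ℂ H'] [CompleteSpace H']
  (π : R →⋆ₐ[ℂ] (H →L[ℂ] H)) (π' : R →⋆ₐ[ℂ] (H' →L[ℂ] H'))

def orbitMap (ξ : H) : R →ₗ[ℂ] H :=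
  (ContinuousLinearMap.apply ℂ H ξ).toLinearMap ∘ₗ π.toAlgHom.toLinearMap

@[simp]
theorem orbitMap_apply (ξ : H) (x : R) : orbitMap π ξ x = π x ξ := rfl

theorem inner_map_apply_left (a : R) (v w : H) : ⟪π a v, w⟫_ℂ = ⟪v, π (star a) w⟫_ℂ := by
  rw [map_star, ContinuousLinearMap.star_eq_adjoint, ContinuousLinearMap.adjoint_inner_right]

variable {π π'} {ξ₀ : H} {ξ₀' : H'}

theorem intertwines_of_inner_orbit_eq (hd : DenseRange (orbitMap π ξ₀))
    (hd' : DenseRange (orbitMap π' ξ₀')) {φ₀ : R →ₗ[ℂ] ℂ} {S : H →L[ℂ] H'}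
    (hS : ∀ x y, ⟪π' y ξ₀', S (π x ξ₀)⟫_ℂ = φ₀ (star y * x)) (a : R) :
    S.comp (π a) = (π' a).comp S := by
  refine ContinuousLinearMap.ext_inner_of_denseRange hd hd' fun x y => ?_
  calc ⟪π' y ξ₀', S (π a (π x ξ₀))⟫_ℂ = φ₀ (star (star a * y) * x) := by
        rw [← mul_apply_eq_comp, ← map_mul, hS, star_mul, star_star, mul_assoc]
    _ = ⟪π' y ξ₀', π' a (S (π x ξ₀))⟫_ℂ := by
        rw [← hS, map_mul, mul_apply_eq_comp, inner_map_apply_left, star_star]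

theorem inner_orbit_eq_of_intertwines {S : H →L[ℂ] H'} (hS : ∀ a, S.comp (π a) = (π' a).comp S)
    (x y : R) : ⟪π' y ξ₀', S (π x ξ₀)⟫_ℂ = ⟪ξ₀', S (π (star y * x) ξ₀)⟫_ℂ := by
  rw [inner_map_apply_left, map_mul, mul_apply_eq_comp, ← S.comp_apply (π (star y)), hS]
  rfl

end StarAlgHom

section GNS

variable {R : Type*} [NormedRing R] [StarRing R] [NormedAlgebra ℂ R] {φ φ' : R →ₗ[ℂ] ℂ}
  {H : Type*} [NormedAddCommGroup H] [InnerProductSpace ℂ H] [CompleteSpace H]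
  {H' : Type*} [NormedAddCommGroup H'] [InnerProductSpace ℂ H'] [CompleteSpace H']
  {π : R →⋆ₐ[ℂ] (H →L[ℂ] H)} {ξ₀ : H} {π' : R →⋆ₐ[ℂ] (H' →L[ℂ] H')} {ξ₀' : H'}

theorem IsGNSRep.denseRange (hrep : IsGNSRep φ π ξ₀) : DenseRange (orbitMap π ξ₀) := by
  rw [DenseRange, ← LinearMap.coe_range, ← Submodule.span_eq (LinearMap.range _)]
  exact hrep.1

theorem IsGNSRep.inner_eq (hrep : IsGNSRep φ π ξ₀) (x y : R) :
    ⟪π y ξ₀, π x ξ₀⟫_ℂ = φ (star y * x) := by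
  rw [inner_map_apply_left, ← mul_apply_eq_comp, ← map_mul, hrep.2]

theorem IsGNSRep.norm_sq (hrep : IsGNSRep φ π ξ₀) (x : R) :
    ‖π x ξ₀‖ ^ 2 = (φ (star x * x)).re := by
  rw [← hrep.inner_eq, inner_self_eq_norm_sq_to_K]
  norm_cast

theorem IsGNSRep.exists_inner_orbit_eq [StarModule ℂ R] (hrep : IsGNSRep φ π ξ₀)
    (hrep' : IsGNSRep φ' π' ξ₀') (φ₀ : R →ₗ[ℂ] ℂ) {c : ℝ}
    (h : ∀ x y, ‖φ₀ (star y * x)‖ ^ 2 ≤ c * (φ (star x * x)).re * (φ' (star y * y)).re) :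
    ∃ S : H →L[ℂ] H', (∀ x y, ⟪π' y ξ₀', S (π x ξ₀)⟫_ℂ = φ₀ (star y * x)) ∧ ‖S‖ ≤ √c := by
  let b : R →ₗ⋆[ℂ] R →ₗ[ℂ] ℂ :=
    (LinearMap.mul ℂ R).compr₂ φ₀ ∘ₛₗ (starLinearEquiv ℂ (A := R)).toLinearMap
  have hb (y x : R) : ‖b y x‖ ≤ √c * ‖orbitMap π' ξ₀' y‖ * ‖orbitMap π ξ₀ x‖ := by
    have hsqrt := Real.abs_le_sqrt (h x y)
    rwa [← hrep.norm_sq, ← hrep'.norm_sq, mul_assoc, Real.sqrt_mul' _ (by positivity),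
      Real.sqrt_mul (by positivity), Real.sqrt_sq (norm_nonneg _), Real.sqrt_sq (norm_nonneg _),
      abs_norm, mul_comm ‖π x ξ₀‖, ← mul_assoc] at hsqrt
  obtain ⟨B, hB, hBc⟩ := LinearMap.exists_extend₂_of_norm_le b hrep.denseRange hrep'.denseRange
    (Real.sqrt_nonneg c) hb
  obtain ⟨S, hS, hSB⟩ := exists_inner_apply_eq_sesqForm B
  exact ⟨S, fun x y => (hS _ _).trans (hB y x), hSB.trans hBc⟩

theorem IsGNSRep.norm_inner_orbit_sq_le (hrep : IsGNSRep φ π ξ₀) (hrep' : IsGNSRep φ' π' ξ₀')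
    (S : H →L[ℂ] H') (x y : R) :
    ‖⟪π' y ξ₀', S (π x ξ₀)⟫_ℂ‖ ^ 2 ≤ ‖S‖ ^ 2 * (φ (star x * x)).re * (φ' (star y * y)).re := by
  rw [← hrep.norm_sq, ← hrep'.norm_sq, ← mul_pow, ← mul_pow, mul_comm _ ‖π' y ξ₀'‖]
  gcongr
  exact (norm_inner_le_norm _ _).trans (mul_le_mul_of_nonneg_left (S.le_opNorm _) (norm_nonneg _))

end GNS

theorem gns_intertwiner_general (φ φ' : A →ₗ[ℂ] ℂ)
    {H : Type*} [NormedAddCommGroup H] [InnerProductSpace ℂ H] [CompleteSpace H]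
    {H' : Type*} [NormedAddCommGroup H'] [InnerProductSpace ℂ H'] [CompleteSpace H']
    (π : A →⋆ₐ[ℂ] (H →L[ℂ] H)) (ξ₀ : H) (π' : A →⋆ₐ[ℂ] (H' →L[ℂ] H')) (ξ₀' : H')
    (hrep : IsGNSRep φ π ξ₀) (hrep' : IsGNSRep φ' π' ξ₀') :
    (∀ (φ₀ : A →ₗ[ℂ] ℂ) (c : ℝ), 0 < c →
      (∀ x y : A, ‖φ₀ (star y * x)‖ ^ 2 ≤ c * (φ (star x * x)).re * (φ' (star y * y)).re) →
      (∃! S : H →L[ℂ] H',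
        (∀ x : A, S.comp (π x) = (π' x).comp S) ∧
        (∀ x y : A, ⟪π' y ξ₀', S (π x ξ₀)⟫_ℂ = φ₀ (star y * x))) ∧
      (∀ S : H →L[ℂ] H',
        ((∀ x : A, S.comp (π x) = (π' x).comp S) ∧
         (∀ x y : A, ⟪π' y ξ₀', S (π x ξ₀)⟫_ℂ = φ₀ (star y * x))) → ‖S‖ ≤ Real.sqrt c)) ∧
    (∀ S : H →L[ℂ] H', (∀ x : A, S.comp (π x) = (π' x).comp S) →
      (∃! φ₀ : A →ₗ[ℂ] ℂ, ∀ x y : A, ⟪π' y ξ₀', S (π x ξ₀)⟫_ℂ = φ₀ (star y * x)) ∧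
      (∀ φ₀ : A →ₗ[ℂ] ℂ, (∀ x y : A, ⟪π' y ξ₀', S (π x ξ₀)⟫_ℂ = φ₀ (star y * x)) →
        ∀ x y : A,
          ‖φ₀ (star y * x)‖ ^ 2 ≤ ‖S‖ ^ 2 * (φ (star x * x)).re * (φ' (star y * y)).re)) := by
  refine ⟨fun φ₀ c _ hφ₀ => ?_, fun S hS => ?_⟩
  · obtain ⟨S, hS, hSc⟩ := hrep.exists_inner_orbit_eq hrep' φ₀ hφ₀
    have huniq (T : H →L[ℂ] H') (hT : ∀ x y, ⟪π' y ξ₀', T (π x ξ₀)⟫_ℂ = φ₀ (star y * x)) :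
        T = S :=
      ContinuousLinearMap.ext_inner_of_denseRange hrep.denseRange hrep'.denseRange
        fun x y => (hT x y).trans (hS x y).symm
    exact ⟨⟨S, ⟨intertwines_of_inner_orbit_eq hrep.denseRange hrep'.denseRange hS, hS⟩,
      fun T hT => huniq T hT.2⟩, fun T hT => huniq T hT.2 ▸ hSc⟩
  · have hcoeff := inner_orbit_eq_of_intertwines (ξ₀ := ξ₀) (ξ₀' := ξ₀') hS
    refine ⟨⟨((innerSL ℂ ξ₀').comp S).toLinearMap ∘ₗ orbitMap π ξ₀, hcoeff, fun ψ hψ => ?_⟩,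
      fun ψ hψ x y => hψ x y ▸ hrep.norm_inner_orbit_sq_le hrep' S x y⟩
    refine LinearMap.ext fun x => ?_
    simpa using (hψ x 1).symm.trans (hcoeff x 1)

/-- Intertwining operators between GNS representations correspond to linear functionals
`φ₀` with `|φ₀(y*x)|² ≤ c φ(x*x) φ'(y*y)`. -/
theorem gns_intertwiner (φ φ' : A →ₗ[ℂ] ℂ)
    (hφ : ∀ x : A, 0 ≤ φ (star x * x)) (hφ' : ∀ x : A, 0 ≤ φ' (star x * x))
    {H : Type*} [NormedAddCommGroup H] [InnerProductSpace ℂ H] [CompleteSpace H]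
    {H' : Type*} [NormedAddCommGroup H'] [InnerProductSpace ℂ H'] [CompleteSpace H']
    (π : A →⋆ₐ[ℂ] (H →L[ℂ] H)) (ξ₀ : H) (π' : A →⋆ₐ[ℂ] (H' →L[ℂ] H')) (ξ₀' : H')
    (hrep : IsGNSRep φ π ξ₀) (hrep' : IsGNSRep φ' π' ξ₀') :
    (∀ (φ₀ : A →ₗ[ℂ] ℂ) (c : ℝ), 0 < c →
      (∀ x y : A, ‖φ₀ (star y * x)‖ ^ 2 ≤ c * (φ (star x * x)).re * (φ' (star y * y)).re) →
      (∃! S : H →L[ℂ] H',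
        (∀ x : A, S.comp (π x) = (π' x).comp S) ∧
        (∀ x y : A, ⟪π' y ξ₀', S (π x ξ₀)⟫_ℂ = φ₀ (star y * x))) ∧
      (∀ S : H →L[ℂ] H',
        ((∀ x : A, S.comp (π x) = (π' x).comp S) ∧
         (∀ x y : A, ⟪π' y ξ₀', S (π x ξ₀)⟫_ℂ = φ₀ (star y * x))) → ‖S‖ ≤ Real.sqrt c)) ∧
    (∀ S : H →L[ℂ] H', (∀ x : A, S.comp (π x) = (π' x).comp S) →
      (∃! φ₀ : A →ₗ[ℂ] ℂ, ∀ x y : A, ⟪π' y ξ₀', S (π x ξ₀)⟫_ℂ = φ₀ (star y * x)) ∧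
      (∀ φ₀ : A →ₗ[ℂ] ℂ, (∀ x y : A, ⟪π' y ξ₀', S (π x ξ₀)⟫_ℂ = φ₀ (star y * x)) →
        ∀ x y : A,
          ‖φ₀ (star y * x)‖ ^ 2 ≤ ‖S‖ ^ 2 * (φ (star x * x)).re * (φ' (star y * y)).re)) :=
  gns_intertwiner_general φ φ' π ξ₀ π' ξ₀' hrep hrep'
end
end

section
/- Let G be a group, and let K, K' be positive definite maps on G satisfying K(x,y) = K(zx,zy) and K'(x,y) = K'(zx,zy) for all x, y, z ∈ G, with associated cyclic unitary representations (H_K, π_K, ξ₀) and (H_{K'}, π_{K'}, ξ₀'). Let L : G × G → ℂ with L² ≤ c K K' for some c > 0. If L(x,y) = L(zx,zy) for all x, y, z ∈ G, then there is a unique bounded linear operator S : H_K → H_{K'} such that S π_K(x) = π_{K'}(x) S for all x ∈ G and ⟨S π_K(x) ξ₀, π_{K'}(y) ξ₀'⟩ = L(x,y) for all x, y ∈ G; moreover ‖S‖ ≤ √c. Conversely, if S : H_K → H_{K'} is a bounded linear operator satisfying S π_K(x) = π_{K'}(x) S for all x ∈ G, then there is a unique L : G × G → ℂ with ⟨S π_K(x)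 ξ₀, π_{K'}(y) ξ₀'⟩ = L(x,y) for all x, y ∈ G; in addition L satisfies L(x,y) = L(zx,zy) for all x, y, z ∈ G and L² ≤ ‖S‖² K K'. -/
open scoped InnerProductSpace ComplexOrder Classical
open Complex

noncomputable section

/-- `(H, π, ξ₀)` is the cyclic unitary representation associated to the group positive
definite map `K`. -/
def IsGroupCyclicRep {G : Type*} [Group G] (K : G → G → ℂ)
    {H : Type*} [NormedAddCommGroup H] [InnerProductSpace ℂ H]
    (π : G →* (H ≃ₗᵢ[ℂ] H)) (ξ₀ : H) : Prop :=
  Dense (↑(Submodule.span ℂ (Set.range fun g : G => π g ξ₀)) : Set H) ∧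
    ∀ x y : G, ⟪π y ξ₀, π x ξ₀⟫_ℂ = K x y

/-! The bound `L² ≤ c K K'` says precisely that
`(∑ ξᵢ π(xᵢ)ξ₀, ∑ ηⱼ π'(yⱼ)ξ₀') ↦ ∑ L(xᵢ, yⱼ) ξᵢ conj ηⱼ` is a well-defined sesquilinear form on
the dense spans of the two orbits, bounded by `√c` times the norms. It therefore extends to all of
`H × H'` and is the matrix-coefficient form of an operator `S` with `‖S‖ ≤ √c`. Invariance of `L`
means that `S π(g)` and `π'(g) S` have the same matrix coefficients, so `S` intertwines, and
uniqueness is density of the orbits. Conversely, Cauchy–Schwarz for `⟪A, S B⟫` gives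
`L² ≤ ‖S‖² K K'`. -/

open InnerProductSpace

section BoundedForm

variable {𝕜 V W H H' : Type*} [RCLike 𝕜] [AddCommGroup V] [Module 𝕜 V] [AddCommGroup W]
  [Module 𝕜 W] [NormedAddCommGroup H] [InnerProductSpace 𝕜 H] [CompleteSpace H]
  [NormedAddCommGroup H'] [InnerProductSpace 𝕜 H'] [CompleteSpace H']

/-- `β` is extended by density first in `f`, then in `g`; the resulting bounded form on `H' × H`
is turned into an operator by the Riesz representation and the adjoint. -/
theorem exists_clm_inner_eq_of_norm_le {ε : V →ₗ[𝕜] H} {ε' : W →ₗ[𝕜] H'} (hε : DenseRange ε)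
    (hε' : DenseRange ε') (β : W →ₗ⋆[𝕜] V →ₗ[𝕜] 𝕜) {C : ℝ} (hC : 0 ≤ C)
    (hβ : ∀ g f, ‖β g f‖ ≤ C * ‖ε f‖ * ‖ε' g‖) :
    ∃ T : H →L[𝕜] H', (∀ f g, ⟪ε' g, T (ε f)⟫_𝕜 = β g f) ∧ ‖T‖ ≤ C := by
  have hβg (g : W) (f : V) : ‖β g f‖ ≤ C * ‖ε' g‖ * ‖ε f‖ := (hβ g f).trans_eq (by ring)
  have hext (g : W) (f : V) : (β g).extendOfNorm ε (ε f) = β g f :=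
    LinearMap.extendOfNorm_eq hε ⟨_, hβg g⟩ f
  let Φ : W →ₗ⋆[𝕜] StrongDual 𝕜 H :=
    { toFun g := (β g).extendOfNorm ε
      map_add' g₁ g₂ := LinearMap.extendOfNorm_unique hε _ (hβg _) _ <| by
        ext f; simp [hext]
      map_smul' a g := LinearMap.extendOfNorm_unique hε _ (hβg _) _ <| by
        ext f; simp [hext] }
  have hΦ (g : W) : ‖Φ g‖ ≤ C * ‖ε' g‖ :=
    LinearMap.opNorm_extendOfNorm_le hε (by positivity) (hβg g)
  let Ψ : H' →L⋆[𝕜] StrongDual 𝕜 H := Φ.extendOfNorm ε'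
  have hΨ (g : W) : Ψ (ε' g) = Φ g := LinearMap.extendOfNorm_eq hε' ⟨C, hΦ⟩ g
  let A : H' →L[𝕜] H := (toDual 𝕜 H).symm.toContinuousLinearEquiv.toContinuousLinearMap.comp Ψ
  refine ⟨ContinuousLinearMap.adjoint A, fun f g => ?_, ?_⟩
  · simp [A, ContinuousLinearMap.adjoint_inner_right, hΨ, Φ, hext]
  · rw [LinearIsometryEquiv.norm_map]
    exact A.opNorm_le_bound hC fun y => by
      simpa [A] using Ψ.le_of_opNorm_le (LinearMap.opNorm_extendOfNorm_le hε' hC hΦ) y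

end BoundedForm

section KernelPairing

variable {𝕜 X Y : Type*} [RCLike 𝕜]

def kernelPairing (L : X → Y → 𝕜) : (Y →₀ 𝕜) →ₗ⋆[𝕜] (X →₀ 𝕜) →ₗ[𝕜] 𝕜 :=
  LinearMap.mk₂'ₛₗ (starRingEnd 𝕜) (RingHom.id 𝕜)
    (fun g f => f.sum fun x a => g.sum fun y b => L x y * a * starRingEnd 𝕜 b)
    (fun g₁ g₂ f => by
      rw [← Finsupp.sum_add]
      exact Finsupp.sum_congr fun x _ =>
        Finsupp.sum_add_index' (by simp) fun _ _ _ => by rw [map_add, mul_add])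
    (fun c g f => by
      rw [smul_eq_mul, Finsupp.mul_sum]
      refine Finsupp.sum_congr fun x _ => ?_
      rw [Finsupp.sum_smul_index' (by simp), Finsupp.mul_sum]
      exact Finsupp.sum_congr fun y _ => by simp only [smul_eq_mul, map_mul]; ring)
    (fun g f₁ f₂ => Finsupp.sum_add_index' (by simp) fun x _ _ => by
      rw [← Finsupp.sum_add]
      exact Finsupp.sum_congr fun y _ => by ring)
    (fun c g f => by
      rw [Finsupp.sum_smul_index' (by simp), smul_eq_mul, Finsupp.mul_sum]
      refine Finsupp.sum_congr fun x _ => ?_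
      rw [Finsupp.mul_sum]
      exact Finsupp.sum_congr fun y _ => by simp only [smul_eq_mul, RingHom.id_apply]; ring)

@[simp]
theorem kernelPairing_single (L : X → Y → 𝕜) (x : X) (y : Y) (a b : 𝕜) :
    kernelPairing L (Finsupp.single y b) (Finsupp.single x a) = L x y * a * starRingEnd 𝕜 b := by
  simp [kernelPairing]

end KernelPairing

theorem Finsupp.exists_eq_sum_fin_single {α M : Type*} [AddCommMonoid M] (f : α →₀ M) :
    ∃ (n : ℕ) (x : Fin n → α) (a : Fin n → M), f = ∑ i, Finsupp.single (x i) (a i) := by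
  let e := f.support.equivFin
  refine ⟨_, fun i => e.symm i, fun i => f (e.symm i), ?_⟩
  conv_lhs => rw [← f.sum_single, Finsupp.sum, ← Finset.sum_coe_sort f.support]
  exact (Fintype.sum_equiv e.symm _ _ fun _ => rfl).symm

section DenseSpan

variable {𝕜 X Y H H' : Type*} [RCLike 𝕜] [NormedAddCommGroup H] [InnerProductSpace 𝕜 H]
  [NormedAddCommGroup H'] [InnerProductSpace 𝕜 H']

theorem Finsupp.denseRange_linearCombination {v : X → H}
    (hv : Dense (Submodule.span 𝕜 (Set.range v) : Set H)) :
    DenseRange (Finsupp.linearCombination 𝕜 v) := by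
  rwa [DenseRange, ← LinearMap.coe_range, Finsupp.range_linearCombination]

theorem eq_of_inner_eq_of_dense_span {w : Y → H'}
    (hw : Dense (Submodule.span 𝕜 (Set.range w) : Set H')) {a b : H'}
    (h : ∀ y, ⟪w y, a⟫_𝕜 = ⟪w y, b⟫_𝕜) : a = b :=
  (Finsupp.denseRange_linearCombination hw).eq_of_inner_right 𝕜 fun g => by
    induction g using Finsupp.induction_linear with
    | zero => simp
    | add g₁ g₂ h₁ h₂ => simp only [map_add, inner_add_left, h₁, h₂]
    | single y b => simp [inner_smul_left, h y]

theorem ContinuousLinearMap.ext_of_inner_dense_span {v : X → H} {w : Y → H'}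
    (hv : Dense (Submodule.span 𝕜 (Set.range v) : Set H))
    (hw : Dense (Submodule.span 𝕜 (Set.range w) : Set H')) {S T : H →L[𝕜] H'}
    (h : ∀ x y, ⟪w y, S (v x)⟫_𝕜 = ⟪w y, T (v x)⟫_𝕜) : S = T :=
  ContinuousLinearMap.ext_on hv <| by
    rintro _ ⟨x, rfl⟩
    exact eq_of_inner_eq_of_dense_span hw (h x)

theorem sum_sum_mul_conj_eq_inner {v : X → H} {w : Y → H'} {L : X → Y → 𝕜} {S : H →L[𝕜] H'}
    (hS : ∀ x y, ⟪w y, S (v x)⟫_𝕜 = L x y) {m n : ℕ} (x : Fin m → X) (y : Fin n → Y)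
    (ξ : Fin m → 𝕜) (η : Fin n → 𝕜) :
    ∑ i, ∑ j, L (x i) (y j) * ξ i * starRingEnd 𝕜 (η j) =
      ⟪∑ j, η j • w (y j), S (∑ i, ξ i • v (x i))⟫_𝕜 := by
  simp_rw [map_sum, map_smul, sum_inner, inner_sum, inner_smul_left, inner_smul_right, hS]
  rw [Finset.sum_comm]
  exact Finset.sum_congr rfl fun i _ => Finset.sum_congr rfl fun j _ => by ring

theorem re_sum_sum_mul_conj_eq_norm_sq {v : X → H} {K : X → X → 𝕜}
    (hv : ∀ x y, ⟪v y, v x⟫_𝕜 = K x y) {n : ℕ} (x : Fin n → X) (ξ : Fin n → 𝕜) :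
    RCLike.re (∑ i, ∑ j, K (x i) (x j) * ξ i * starRingEnd 𝕜 (ξ j)) =
      ‖∑ i, ξ i • v (x i)‖ ^ 2 := by
  rw [sum_sum_mul_conj_eq_inner (S := ContinuousLinearMap.id 𝕜 H) hv]
  exact inner_self_eq_norm_sq _

theorem ContinuousLinearMap.norm_inner_apply_le (S : H →L[𝕜] H') (x : H) (y : H') :
    ‖⟪y, S x⟫_𝕜‖ ≤ ‖S‖ * ‖x‖ * ‖y‖ :=
  calc ‖⟪y, S x⟫_𝕜‖ ≤ ‖y‖ * ‖S x‖ := norm_inner_le_norm _ _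
    _ ≤ ‖y‖ * (‖S‖ * ‖x‖) := by gcongr; exact S.le_opNorm x
    _ = ‖S‖ * ‖x‖ * ‖y‖ := by ring

variable [CompleteSpace H] [CompleteSpace H']

theorem exists_clm_inner_eq_of_kernel_bound {v : X → H} {w : Y → H'}
    (hv : Dense (Submodule.span 𝕜 (Set.range v) : Set H))
    (hw : Dense (Submodule.span 𝕜 (Set.range w) : Set H')) (L : X → Y → 𝕜) {C : ℝ} (hC : 0 ≤ C)
    (hL : ∀ (m n : ℕ) (x : Fin m → X) (y : Fin n → Y) (ξ : Fin m → 𝕜) (η : Fin n → 𝕜),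
      ‖∑ i, ∑ j, L (x i) (y j) * ξ i * starRingEnd 𝕜 (η j)‖ ≤
        C * ‖∑ i, ξ i • v (x i)‖ * ‖∑ j, η j • w (y j)‖) :
    ∃ T : H →L[𝕜] H', (∀ x y, ⟪w y, T (v x)⟫_𝕜 = L x y) ∧ ‖T‖ ≤ C := by
  have hβ (g : Y →₀ 𝕜) (f : X →₀ 𝕜) : ‖kernelPairing L g f‖ ≤
      C * ‖Finsupp.linearCombination 𝕜 v f‖ * ‖Finsupp.linearCombination 𝕜 w g‖ := by
    obtain ⟨m, x, ξ, rfl⟩ := f.exists_eq_sum_fin_single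
    obtain ⟨n, y, η, rfl⟩ := g.exists_eq_sum_fin_single
    simpa only [map_sum, LinearMap.sum_apply, kernelPairing_single,
      Finsupp.linearCombination_single] using hL m n x y ξ η
  obtain ⟨T, hT, hTC⟩ := exists_clm_inner_eq_of_norm_le
    (Finsupp.denseRange_linearCombination (𝕜 := 𝕜) hv)
    (Finsupp.denseRange_linearCombination (𝕜 := 𝕜) hw) (kernelPairing L) hC hβ
  exact ⟨T, fun x y => by simpa using hT (Finsupp.single x 1) (Finsupp.single y 1), hTC⟩

end DenseSpan

theorem kernelSqLE_iff_norm_le {X H H' : Type*} [NormedAddCommGroup H] [InnerProductSpace ℂ H]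
    [NormedAddCommGroup H'] [InnerProductSpace ℂ H'] {K K' L : X → X → ℂ} {v : X → H}
    {w : X → H'} (hv : ∀ x y, ⟪v y, v x⟫_ℂ = K x y) (hw : ∀ x y, ⟪w y, w x⟫_ℂ = K' x y)
    {c : ℝ} (hc : 0 ≤ c) :
    KernelSqLE L K K' c ↔
      ∀ (m n : ℕ) (x : Fin m → X) (y : Fin n → X) (ξ : Fin m → ℂ) (η : Fin n → ℂ),
        ‖∑ i, ∑ j, L (x i) (y j) * ξ i * starRingEnd ℂ (η j)‖ ≤
          Real.sqrt c * ‖∑ i, ξ i • v (x i)‖ * ‖∑ j, η j • w (y j)‖ := by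
  unfold KernelSqLE
  refine forall_congr' fun m => forall_congr' fun n => forall_congr' fun x => forall_congr' fun y =>
    forall_congr' fun ξ => forall_congr' fun η => ?_
  rw [← RCLike.re_to_complex, re_sum_sum_mul_conj_eq_norm_sq hv, ← RCLike.re_to_complex,
    re_sum_sum_mul_conj_eq_norm_sq hw,
    ← pow_le_pow_iff_left₀ (norm_nonneg _) (by positivity) two_ne_zero, mul_pow, mul_pow,
    Real.sq_sqrt hc]

section GroupRepresentation

variable {𝕜 G H H' : Type*} [RCLike 𝕜] [Group G] [NormedAddCommGroup H] [InnerProductSpace 𝕜 H]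
  [NormedAddCommGroup H'] [InnerProductSpace 𝕜 H'] {π : G →* (H ≃ₗᵢ[𝕜] H)}
  {π' : G →* (H' ≃ₗᵢ[𝕜] H')} {ξ₀ : H} {ξ₀' : H'}

theorem inner_mul_apply_eq_of_intertwines {S : H →L[𝕜] H'}
    (hS : ∀ (g : G) (u : H), S (π g u) = π' g (S u)) (x y z : G) :
    ⟪π' (z * y) ξ₀', S (π (z * x) ξ₀)⟫_𝕜 = ⟪π' y ξ₀', S (π x ξ₀)⟫_𝕜 := by
  simp only [map_mul, LinearIsometryEquiv.coe_mul, Function.comp_apply, hS,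
    LinearIsometryEquiv.inner_map_map]

theorem intertwines_of_inner_eq (hd : Dense (Submodule.span 𝕜 (Set.range fun g => π g ξ₀) : Set H))
    (hd' : Dense (Submodule.span 𝕜 (Set.range fun g => π' g ξ₀') : Set H')) {S : H →L[𝕜] H'}
    {L : G → G → 𝕜} (hS : ∀ x y, ⟪π' y ξ₀', S (π x ξ₀)⟫_𝕜 = L x y)
    (hL : ∀ x y z, L x y = L (z * x) (z * y)) (g : G) (u : H) : S (π g u) = π' g (S u) := by
  suffices S.comp (π g).toContinuousLinearEquiv.toContinuousLinearMap =
      (π' g).toContinuousLinearEquiv.toContinuousLinearMap.comp S from congr($this u)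
  refine ContinuousLinearMap.ext_of_inner_dense_span hd hd' fun x y => ?_
  simp only [ContinuousLinearMap.comp_apply, ContinuousLinearEquiv.coe_coe,
    LinearIsometryEquiv.coe_toContinuousLinearEquiv]
  have hx : π g (π x ξ₀) = π (g * x) ξ₀ := by rw [map_mul, LinearIsometryEquiv.coe_mul]; rfl
  have hy : π' y ξ₀' = π' g (π' (g⁻¹ * y) ξ₀') := by
    rw [← Function.comp_apply (f := π' g), ← LinearIsometryEquiv.coe_mul, ← map_mul,
      mul_inv_cancel_left]
  calc ⟪π' y ξ₀', S (π g (π x ξ₀))⟫_𝕜 = L x (g⁻¹ * y) := by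
        rw [hx, hS, hL x (g⁻¹ * y) g, mul_inv_cancel_left]
    _ = ⟪π' y ξ₀', π' g (S (π x ξ₀))⟫_𝕜 := by rw [hy, LinearIsometryEquiv.inner_map_map, hS]

end GroupRepresentation

theorem group_intertwiner_general {G : Type*} [Group G] (K K' : G → G → ℂ)
    {H : Type*} [NormedAddCommGroup H] [InnerProductSpace ℂ H] [CompleteSpace H]
    {H' : Type*} [NormedAddCommGroup H'] [InnerProductSpace ℂ H'] [CompleteSpace H']
    (π : G →* (H ≃ₗᵢ[ℂ] H)) (ξ₀ : H) (π' : G →* (H' ≃ₗᵢ[ℂ] H')) (ξ₀' : H')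
    (hrep : IsGroupCyclicRep K π ξ₀) (hrep' : IsGroupCyclicRep K' π' ξ₀') :
    (∀ (L : G → G → ℂ) (c : ℝ), 0 < c → KernelSqLE L K K' c →
      (∀ x y z : G, L x y = L (z * x) (z * y)) →
      (∃! S : H →L[ℂ] H',
        (∀ (g : G) (v : H), S (π g v) = π' g (S v)) ∧
        (∀ x y : G, ⟪π' y ξ₀', S (π x ξ₀)⟫_ℂ = L x y)) ∧
      (∀ S : H →L[ℂ] H',
        ((∀ (g : G) (v : H), S (π g v) = π' g (S v)) ∧
         (∀ x y : G, ⟪π' y ξ₀', S (π x ξ₀)⟫_ℂ = L x y)) → ‖S‖ ≤ Real.sqrt c)) ∧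
    (∀ S : H →L[ℂ] H', (∀ (g : G) (v : H), S (π g v) = π' g (S v)) →
      (∃! L : G → G → ℂ, ∀ x y : G, ⟪π' y ξ₀', S (π x ξ₀)⟫_ℂ = L x y) ∧
      (∀ L : G → G → ℂ, (∀ x y : G, ⟪π' y ξ₀', S (π x ξ₀)⟫_ℂ = L x y) →
        (∀ x y z : G, L x y = L (z * x) (z * y)) ∧ KernelSqLE L K K' (‖S‖ ^ 2))) := by
  refine ⟨fun L c hc hL hLinv => ?_, fun S hS => ?_⟩
  · obtain ⟨T, hT, hTc⟩ := exists_clm_inner_eq_of_kernel_bound hrep.1 hrep'.1 L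
      (Real.sqrt_nonneg c) ((kernelSqLE_iff_norm_le hrep.2 hrep'.2 hc.le).1 hL)
    have huniq (S : H →L[ℂ] H') (hS : ∀ x y, ⟪π' y ξ₀', S (π x ξ₀)⟫_ℂ = L x y) : S = T :=
      ContinuousLinearMap.ext_of_inner_dense_span hrep.1 hrep'.1 fun x y => by rw [hS, hT]
    exact ⟨⟨T, ⟨intertwines_of_inner_eq hrep.1 hrep'.1 hT hLinv, hT⟩, fun S hS => huniq S hS.2⟩,
      fun S hS => huniq S hS.2 ▸ hTc⟩
  · refine ⟨⟨fun x y => ⟪π' y ξ₀', S (π x ξ₀)⟫_ℂ, fun _ _ => rfl,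
      fun L hL => funext₂ fun x y => (hL x y).symm⟩, fun L hL => ⟨fun x y z => ?_, ?_⟩⟩
    · rw [← hL, ← hL, inner_mul_apply_eq_of_intertwines hS]
    · refine (kernelSqLE_iff_norm_le hrep.2 hrep'.2 (sq_nonneg _)).2 fun m n x y ξ η => ?_
      rw [Real.sqrt_sq (norm_nonneg S), sum_sum_mul_conj_eq_inner hL]
      exact S.norm_inner_apply_le _ _

/-- Intertwining operators between the cyclic unitary representations associated to two
group positive definite maps correspond to translation-invariant bikernels `L` with
`L² ≤ c K K'`. -/
theorem group_intertwiner {G : Type*} [Group G] (K K' : G → G → ℂ)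
    (hK : IsPosDefKernel K) (hK' : IsPosDefKernel K')
    (hKinv : ∀ x y z : G, K x y = K (z * x) (z * y))
    (hK'inv : ∀ x y z : G, K' x y = K' (z * x) (z * y))
    {H : Type*} [NormedAddCommGroup H] [InnerProductSpace ℂ H] [CompleteSpace H]
    {H' : Type*} [NormedAddCommGroup H'] [InnerProductSpace ℂ H'] [CompleteSpace H']
    (π : G →* (H ≃ₗᵢ[ℂ] H)) (ξ₀ : H) (π' : G →* (H' ≃ₗᵢ[ℂ] H')) (ξ₀' : H')
    (hrep : IsGroupCyclicRep K π ξ₀) (hrep' : IsGroupCyclicRep K' π' ξ₀') :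
    (∀ (L : G → G → ℂ) (c : ℝ), 0 < c → KernelSqLE L K K' c →
      (∀ x y z : G, L x y = L (z * x) (z * y)) →
      (∃! S : H →L[ℂ] H',
        (∀ (g : G) (v : H), S (π g v) = π' g (S v)) ∧
        (∀ x y : G, ⟪π' y ξ₀', S (π x ξ₀)⟫_ℂ = L x y)) ∧
      (∀ S : H →L[ℂ] H',
        ((∀ (g : G) (v : H), S (π g v) = π' g (S v)) ∧
         (∀ x y : G, ⟪π' y ξ₀', S (π x ξ₀)⟫_ℂ = L x y)) → ‖S‖ ≤ Real.sqrt c)) ∧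
    (∀ S : H →L[ℂ] H', (∀ (g : G) (v : H), S (π g v) = π' g (S v)) →
      (∃! L : G → G → ℂ, ∀ x y : G, ⟪π' y ξ₀', S (π x ξ₀)⟫_ℂ = L x y) ∧
      (∀ L : G → G → ℂ, (∀ x y : G, ⟪π' y ξ₀', S (π x ξ₀)⟫_ℂ = L x y) →
        (∀ x y z : G, L x y = L (z * x) (z * y)) ∧ KernelSqLE L K K' (‖S‖ ^ 2))) :=
  group_intertwiner_general K K' π ξ₀ π' ξ₀' hrep hrep'
end
end

section
/- Let K be a positive definite map on a nonempty set X with Kolmogorov representation (H_K, v_K). Then the family {v_K(x) : x ∈ X} is a normalized tight frame for H_K if and only if for all finite families x_1,…,x_n ∈ X and ξ_1,…,ξ_n ∈ ℂ: ∑_{i,j=1}^n K(x_i,x_j) ξ_i conj(ξ_j) = ∑_{x ∈ X} |∑_{i=1}^n K(x_i,x) ξ_i|². -/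
open scoped InnerProductSpace ComplexOrder Classical
open Complex

noncomputable section

/-!
On the dense span of the `v x` the kernel identity is exactly Parseval's identity, because
`⟪v y, ∑ i, ξ i • v (x i)⟫ = ∑ i, K (x i) y * ξ i` and `‖∑ i, ξ i • v (x i)‖²` is the quadratic
form of `K`. Parseval's identity on a dense set first gives Bessel's inequality everywhere, so the
analysis operator `f ↦ (⟪v y, f⟫)_y` is a bounded map into `ℓ²(X)`; it is isometric on a dense
set, hence everywhere.
-/

theorem Submodule.exists_fin_sum_smul_eq_of_mem_span_range {R M ι : Type*} [Semiring R]
    [AddCommMonoid M] [Module R M] {v : ι → M} {g : M} (hg : g ∈ span R (Set.range v)) :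
    ∃ (n : ℕ) (x : Fin n → ι) (ξ : Fin n → R), ∑ i, ξ i • v (x i) = g := by
  obtain ⟨n, ξ, w, rfl⟩ := mem_span_set'.mp hg
  choose x hx using fun i => (w i).2
  exact ⟨n, x, ξ, by simp only [hx]⟩

section AnalysisOperator

variable {𝕜 E ι : Type*} [RCLike 𝕜] [NormedAddCommGroup E] [InnerProductSpace 𝕜 E] {v : ι → E}

theorem hasSum_norm_inner_sq_of_tsum_eq {f : E} (h : ∑' i, ‖⟪v i, f⟫_𝕜‖ ^ 2 = ‖f‖ ^ 2) :
    HasSum (fun i => ‖⟪v i, f⟫_𝕜‖ ^ 2) (‖f‖ ^ 2) := by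
  by_cases hf : f = 0
  · simp [hf]
  rw [← h]
  refine Summable.hasSum (by_contra fun hs => hf ?_)
  rw [tsum_eq_zero_of_not_summable hs] at h
  simpa using h.symm

theorem sum_norm_inner_sq_le_of_dense {D : Set E} (hD : Dense D)
    (h : ∀ f ∈ D, ∀ s : Finset ι, ∑ i ∈ s, ‖⟪v i, f⟫_𝕜‖ ^ 2 ≤ ‖f‖ ^ 2)
    (s : Finset ι) (f : E) : ∑ i ∈ s, ‖⟪v i, f⟫_𝕜‖ ^ 2 ≤ ‖f‖ ^ 2 :=
  hD.induction (fun g hg => h g hg s) (isClosed_le (by fun_prop) (by fun_prop)) f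

section Bessel

variable (hv : ∀ (s : Finset ι) (f : E), ∑ i ∈ s, ‖⟪v i, f⟫_𝕜‖ ^ 2 ≤ ‖f‖ ^ 2)
include hv

theorem memℓp_inner (f : E) : Memℓp (fun i => ⟪v i, f⟫_𝕜) 2 :=
  memℓp_gen' (C := ‖f‖ ^ 2) fun s => by simpa using hv s f

def analysisOperator : E →L[𝕜] lp (fun _ : ι => 𝕜) 2 :=
  LinearMap.mkContinuous
    { toFun f := ⟨fun i => ⟪v i, f⟫_𝕜, memℓp_inner hv f⟩
      map_add' f g := by ext i; exact inner_add_right _ _ _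
      map_smul' c f := by ext i; simp [inner_smul_right] }
    1 fun f => by
      rw [one_mul]
      exact lp.norm_le_of_forall_sum_le (by simp) (norm_nonneg f) fun s => by simpa using hv s f

theorem analysisOperator_apply (f : E) (i : ι) : analysisOperator hv f i = ⟪v i, f⟫_𝕜 := rfl

theorem norm_analysisOperator_sq (f : E) :
    ‖analysisOperator hv f‖ ^ 2 = ∑' i, ‖⟪v i, f⟫_𝕜‖ ^ 2 := by
  simpa [analysisOperator_apply] using
    lp.norm_rpow_eq_tsum (p := 2) (by simp) (analysisOperator hv f)

end Bessel

theorem tsum_norm_inner_sq_eq_of_dense {D : Set E} (hD : Dense D)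
    (h : ∀ f ∈ D, ∑' i, ‖⟪v i, f⟫_𝕜‖ ^ 2 = ‖f‖ ^ 2) (f : E) :
    ∑' i, ‖⟪v i, f⟫_𝕜‖ ^ 2 = ‖f‖ ^ 2 := by
  have hv := sum_norm_inner_sq_le_of_dense hD fun g hg s =>
    sum_le_hasSum s (fun i _ => by positivity) (hasSum_norm_inner_sq_of_tsum_eq (h g hg))
  rw [← norm_analysisOperator_sq hv]
  exact hD.induction (fun g hg => (norm_analysisOperator_sq hv g).trans (h g hg))
    (isClosed_eq (by fun_prop) (by fun_prop)) f

end AnalysisOperator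

section KolmogorovRep

variable {X H : Type*} [NormedAddCommGroup H] [InnerProductSpace ℂ H] {K : X → X → ℂ}
  {v : X → H} (hKv : ∀ x y : X, ⟪v y, v x⟫_ℂ = K x y) {n : ℕ} (x : Fin n → X) (ξ : Fin n → ℂ)
include hKv

theorem inner_sum_smul_eq_kernel_sum (y : X) :
    ⟪v y, ∑ i, ξ i • v (x i)⟫_ℂ = ∑ i, K (x i) y * ξ i := by
  simp only [inner_sum, inner_smul_right, hKv, mul_comm]

theorem norm_sum_smul_sq_eq_kernel_form :
    ((‖∑ i, ξ i • v (x i)‖ ^ 2 : ℝ) : ℂ) =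
      ∑ i, ∑ j, K (x i) (x j) * ξ i * (starRingEnd ℂ) (ξ j) := by
  have hnorm : ((‖∑ i, ξ i • v (x i)‖ ^ 2 : ℝ) : ℂ) =
      ⟪∑ i, ξ i • v (x i), ∑ i, ξ i • v (x i)⟫_ℂ := by
    exact_mod_cast (inner_self_eq_norm_sq_to_K (𝕜 := ℂ) _).symm
  rw [hnorm, sum_inner, Finset.sum_comm]
  refine Finset.sum_congr rfl fun i _ => ?_
  rw [inner_smul_left, inner_sum_smul_eq_kernel_sum hKv, Finset.mul_sum]
  exact Finset.sum_congr rfl fun j _ => by ring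

theorem kernel_identity_iff_parseval :
    ∑ i, ∑ j, K (x i) (x j) * ξ i * (starRingEnd ℂ) (ξ j) =
        ((∑' y : X, ‖∑ i, K (x i) y * ξ i‖ ^ 2 : ℝ) : ℂ) ↔
      ∑' y, ‖⟪v y, ∑ i, ξ i • v (x i)⟫_ℂ‖ ^ 2 = ‖∑ i, ξ i • v (x i)‖ ^ 2 := by
  simp only [inner_sum_smul_eq_kernel_sum hKv, ← norm_sum_smul_sq_eq_kernel_form hKv,
    Complex.ofReal_inj, eq_comm]

end KolmogorovRep

theorem ntf_iff_kernel_identity_general {X : Type*} (K : X → X → ℂ)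
    {H : Type*} [NormedAddCommGroup H] [InnerProductSpace ℂ H]
    (v : X → H) (hrep : IsKolmogorovRep K H v) :
    IsNormalizedTightFrame v ↔
      ∀ (n : ℕ) (x : Fin n → X) (ξ : Fin n → ℂ),
        ∑ i, ∑ j, K (x i) (x j) * ξ i * (starRingEnd ℂ) (ξ j) =
          ((∑' y : X, ‖∑ i, K (x i) y * ξ i‖ ^ 2 : ℝ) : ℂ) := by
  obtain ⟨hdense, hKv⟩ := hrep
  refine ⟨fun hframe n x ξ => (kernel_identity_iff_parseval hKv x ξ).2 (hframe _),
    fun hid => tsum_norm_inner_sq_eq_of_dense hdense fun g hg => ?_⟩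
  obtain ⟨n, x, ξ, rfl⟩ := Submodule.exists_fin_sum_smul_eq_of_mem_span_range hg
  exact (kernel_identity_iff_parseval hKv x ξ).1 (hid n x ξ)

/-- `{v_K x : x ∈ X}` is a normalized tight frame for `H_K` iff the kernel satisfies
`∑_{i,j} K(x_i,x_j) ξ_i conj ξ_j = ∑_{x ∈ X} |∑_i K(x_i,x) ξ_i|²`. -/
theorem ntf_iff_kernel_identity {X : Type*} [Nonempty X] (K : X → X → ℂ)
    (hK : IsPosDefKernel K)
    {H : Type*} [NormedAddCommGroup H] [InnerProductSpace ℂ H] [CompleteSpace H]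
    (v : X → H) (hrep : IsKolmogorovRep K H v) :
    IsNormalizedTightFrame v ↔
      ∀ (n : ℕ) (x : Fin n → X) (ξ : Fin n → ℂ),
        ∑ i, ∑ j, K (x i) (x j) * ξ i * (starRingEnd ℂ) (ξ j) =
          ((∑' y : X, ‖∑ i, K (x i) y * ξ i‖ ^ 2 : ℝ) : ℂ) :=
  ntf_iff_kernel_identity_general K v hrep
end
end
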